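/- arXiv:1006.4980 — 2 statements merged into one kernel-verified Lean document; each statement's English description precedes it below -/
import Mathlib

section
/- If α = p/q with p, q coprime integers, then for every fixed λ ∈ R, N_ε(λ) = ε⁻¹ Σ_{k ∈ Z, |k| < (√λ/(2π))√(p²+q²)} (1/(π√(p²+q²)))·(λ - 4π²k²/(p²+q²))^{1/2} + o(ε⁻¹) as ε → 0+. -/
/-!
In the coordinates `m = q k + p l`, `n = q l - p k` the condition `lamkl (p / q) ε k l < λ` reads
`m ^ 2 + ε ^ 2 n ^ 2 < c` with `c = λ (p ^ 2 + q ^ 2) / (4 π ^ 2)`, and the image of `ℤ²` is the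
sublattice `p ^ 2 + q ^ 2 ∣ p m + q n`. Since `q` is a unit modulo `p ^ 2 + q ^ 2`, on each of the
finitely many lines `m ^ 2 < c` the admissible `n` form an arithmetic progression of step
`p ^ 2 + q ^ 2`, so the line carries `2 √(c - m ^ 2) / (ε (p ^ 2 + q ^ 2)) + O(1)` points.
-/

open Real Filter Topology

/-- The eigenvalues λ_{kl}(ε) of Δ_ε on the torus. -/
noncomputable def lamkl (α ε : ℝ) (k l : ℤ) : ℝ :=
  (2 * Real.pi) ^ 2 * ((k + α * l) ^ 2 / (1 + α ^ 2)
    + ε ^ 2 * (-α * k + l) ^ 2 / (1 + α ^ 2))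

/-- The eigenvalue distribution function N_ε(λ). -/
noncomputable def Neps (α ε lam : ℝ) : ℝ :=
  Nat.card {p : ℤ × ℤ | lamkl α ε p.1 p.2 < lam}

theorem Set.ncard_eq_sum_ncard_fiber {α β : Type*} {S : Set (α × β)} (M : Finset α)
    (hM : ∀ y ∈ S, y.1 ∈ M) (hfin : ∀ m ∈ M, {n | (m, n) ∈ S}.Finite) :
    S.ncard = ∑ m ∈ M, {n | (m, n) ∈ S}.ncard := by
  have hS : S = ⋃ m ∈ (M : Set α), Prod.mk m '' {n | (m, n) ∈ S} := by
    ext ⟨m, n⟩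
    simp only [Set.mem_iUnion, Set.mem_image, Set.mem_ofPred_eq, Prod.mk.injEq, Finset.mem_coe]
    exact ⟨fun h => ⟨m, hM _ h, n, h, rfl, rfl⟩, by rintro ⟨_, _, _, h, rfl, rfl⟩; exact h⟩
  have hdisj : (M : Set α).PairwiseDisjoint fun m => Prod.mk m '' {n | (m, n) ∈ S} := by
    intro a _ b _ hab
    simp only [Function.onFun, Set.disjoint_left, Set.mem_image]
    rintro _ ⟨_, _, rfl⟩ ⟨_, _, h⟩
    exact hab (congrArg Prod.fst h).symm
  conv_lhs => rw [hS, M.finite_toSet.ncard_biUnion (fun m hm => (hfin m hm).image _) hdisj,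
    finsum_mem_coe_finset]
  exact Finset.sum_congr rfl fun m _ => Set.ncard_image_of_injective _ (Prod.mk_right_injective m)

theorem abs_ncard_intCast_preimage_Ioo_sub_le {K : Type*} [Field K] [LinearOrder K]
    [IsStrictOrderedRing K] [FloorRing K] {x y : K} (hxy : x ≤ y) :
    |((Int.cast ⁻¹' Set.Ioo x y : Set ℤ).ncard : K) - (y - x)| ≤ 1 := by
  have hset : (Int.cast ⁻¹' Set.Ioo x y : Set ℤ) = ↑(Finset.Ioo ⌊x⌋ ⌈y⌉) := by
    ext j; simp [Int.floor_lt, Int.lt_ceil]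
  have hcard : ((Finset.Ioo ⌊x⌋ ⌈y⌉).card : K) = max ((⌈y⌉ : K) - ⌊x⌋ - 1) 0 := by
    rw [Int.card_Ioo, ← Int.cast_natCast, Int.toNat_eq_max]; push_cast; rfl
  rw [hset, Set.ncard_coe_finset, hcard, abs_le]
  constructor
  · linarith [le_max_left ((⌈y⌉ : K) - ⌊x⌋ - 1) 0, Int.le_ceil y, Int.floor_le x]
  · exact sub_le_iff_le_add'.2 <| max_le
      (by linarith [Int.ceil_lt_add_one y, Int.sub_one_lt_floor x]) (by linarith)

theorem abs_ncard_modEq_abs_lt_sub_le {D : ℤ} (hD : 0 < D) (r : ℤ) {T : ℝ} (hT : 0 ≤ T) :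
    |({n : ℤ | n ≡ r [ZMOD D] ∧ |(n : ℝ)| < T}.ncard : ℝ) - 2 * T / D| ≤ 1 := by
  have hD' : (0 : ℝ) < D := by exact_mod_cast hD
  have hset : {n : ℤ | n ≡ r [ZMOD D] ∧ |(n : ℝ)| < T}
      = (fun j => r + D * j) '' (Int.cast ⁻¹' Set.Ioo ((-T - r) / D) ((T - r) / D)) := by
    ext n
    rw [Set.mem_ofPred_eq, Int.modEq_comm, Int.modEq_iff_add_fac]
    simp only [Set.mem_image, Set.mem_preimage, Set.mem_Ioo, abs_lt, div_lt_iff₀ hD',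
      lt_div_iff₀ hD']
    constructor
    · rintro ⟨⟨t, rfl⟩, h1, h2⟩
      push_cast at h1 h2
      exact ⟨t, ⟨by linarith, by linarith⟩, rfl⟩
    · rintro ⟨t, ⟨h1, h2⟩, rfl⟩
      exact ⟨⟨t, rfl⟩, by push_cast; linarith, by push_cast; linarith⟩
  have hinj : Function.Injective (fun j : ℤ => r + D * j) := fun i j h =>
    mul_left_cancel₀ hD.ne' (add_left_cancel h)
  have hlen : (T - r) / D - (-T - r) / D = 2 * T / D := by ring
  rw [hset, Set.ncard_image_of_injective _ hinj, ← hlen]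
  exact abs_ncard_intCast_preimage_Ioo_sub_le (div_le_div_of_nonneg_right (by linarith) hD'.le)

theorem tendsto_mul_ncard_modEq_abs_lt_div {D : ℤ} (hD : 0 < D) (r : ℤ) {A : ℝ} (hA : 0 ≤ A) :
    Tendsto (fun ε : ℝ => ε * {n : ℤ | n ≡ r [ZMOD D] ∧ |(n : ℝ)| < A / ε}.ncard)
      (𝓝[>] 0) (𝓝 (2 * A / D)) := by
  have hbound : ∀ᶠ ε in 𝓝[>] (0 : ℝ),
      ‖ε * {n : ℤ | n ≡ r [ZMOD D] ∧ |(n : ℝ)| < A / ε}.ncard - 2 * A / D‖ ≤ ε := by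
    filter_upwards [self_mem_nhdsWithin] with ε (hε : 0 < ε)
    set N : ℝ := ({n : ℤ | n ≡ r [ZMOD D] ∧ |(n : ℝ)| < A / ε}.ncard : ℝ)
    calc ‖ε * N - 2 * A / D‖ = ε * |N - 2 * (A / ε) / D| := by
          rw [Real.norm_eq_abs, show ε * N - 2 * A / D = ε * (N - 2 * (A / ε) / D) by field_simp,
            abs_mul, abs_of_pos hε]
      _ ≤ ε * 1 := by gcongr; exact abs_ncard_modEq_abs_lt_sub_le hD r (by positivity)
      _ = ε := mul_one ε
  exact tendsto_iff_norm_sub_tendsto_zero.2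
    (squeeze_zero' (.of_forall fun _ => norm_nonneg _) hbound
      (tendsto_nhdsWithin_of_tendsto_nhds tendsto_id))

theorem IsCoprime.exists_modEq_iff_dvd_add_mul {q D : ℤ} (h : IsCoprime q D) (s : ℤ) :
    ∃ r, ∀ n, D ∣ s + q * n ↔ n ≡ r [ZMOD D] := by
  obtain ⟨a, b, hab⟩ := h
  refine ⟨-(a * s), fun n => ?_⟩
  rw [Int.modEq_iff_dvd]
  constructor
  · rintro ⟨t, ht⟩
    exact ⟨-(a * t) - b * n, by linear_combination (-a) * ht + n * hab⟩
  · rintro ⟨t, ht⟩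
    exact ⟨b * s - q * t, by linear_combination (-q) * ht - s * hab⟩

theorem sq_add_mul_sq_lt_iff {ε : ℝ} (hε : 0 < ε) (a b c : ℝ) :
    a ^ 2 + ε ^ 2 * b ^ 2 < c ↔ |b| < √(c - a ^ 2) / ε := by
  rw [lt_div_iff₀ hε, Real.lt_sqrt (by positivity), mul_pow, sq_abs]
  constructor <;> intro h <;> linarith

theorem mem_Icc_ceil_of_abs_lt {m : ℤ} {T : ℝ} (h : |(m : ℝ)| < T) :
    m ∈ Finset.Icc (-⌈T⌉) ⌈T⌉ := by
  have hm : |(m : ℝ)| ≤ ⌈T⌉ := h.le.trans (Int.le_ceil T)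
  rw [← Int.cast_abs, Int.cast_le] at hm
  rwa [Finset.mem_Icc, ← abs_le]

theorem mem_Icc_ceil_sqrt_of_sq_lt {m : ℤ} {c : ℝ} (h : (m : ℝ) ^ 2 < c) :
    m ∈ Finset.Icc (-⌈√c⌉) ⌈√c⌉ :=
  mem_Icc_ceil_of_abs_lt ((Real.lt_sqrt (abs_nonneg _)).2 (by rwa [sq_abs]))

section Ellipse

variable {D : ℤ} (p q : ℤ) (c : ℝ)

theorem ncard_ellipse_eq_sum {ε : ℝ} (hε : 0 < ε) :
    {y : ℤ × ℤ | D ∣ p * y.1 + q * y.2 ∧ (y.1 : ℝ) ^ 2 + ε ^ 2 * (y.2 : ℝ) ^ 2 < c}.ncard =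
      ∑ m ∈ Finset.Icc (-⌈√c⌉) ⌈√c⌉,
        {n : ℤ | D ∣ p * m + q * n ∧ |(n : ℝ)| < √(c - m ^ 2) / ε}.ncard := by
  simp_rw [sq_add_mul_sq_lt_iff hε]
  refine Set.ncard_eq_sum_ncard_fiber _ (fun y hy => mem_Icc_ceil_sqrt_of_sq_lt ?_)
    fun m _ => (Finset.finite_toSet _).subset fun n hn =>
      mem_Icc_ceil_of_abs_lt (T := √(c - m ^ 2) / ε) hn.2
  have := (sq_add_mul_sq_lt_iff hε _ _ _).2 hy.2
  nlinarith [sq_nonneg (ε * y.2)]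

theorem tendsto_mul_ncard_ellipse (hD : 0 < D) (hqD : IsCoprime q D) :
    Tendsto (fun ε : ℝ => ε *
        {y : ℤ × ℤ | D ∣ p * y.1 + q * y.2 ∧ (y.1 : ℝ) ^ 2 + ε ^ 2 * (y.2 : ℝ) ^ 2 < c}.ncard)
      (𝓝[>] 0) (𝓝 (∑' m : ℤ, 2 * √(c - m ^ 2) / D)) := by
  have hfiber (m : ℤ) : Tendsto
      (fun ε : ℝ => ε * {n : ℤ | D ∣ p * m + q * n ∧ |(n : ℝ)| < √(c - m ^ 2) / ε}.ncard)
      (𝓝[>] 0) (𝓝 (2 * √(c - m ^ 2) / D)) := by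
    obtain ⟨r, hr⟩ := hqD.exists_modEq_iff_dvd_add_mul (p * m)
    simp_rw [hr]
    exact tendsto_mul_ncard_modEq_abs_lt_div hD r (Real.sqrt_nonneg _)
  rw [tsum_eq_sum (s := Finset.Icc (-⌈√c⌉) ⌈√c⌉) fun m hm => ?_]
  · refine (tendsto_finsetSum _ fun m _ => hfiber m).congr' ?_
    filter_upwards [self_mem_nhdsWithin] with ε hε
    rw [ncard_ellipse_eq_sum p q c hε, Nat.cast_sum, Finset.mul_sum]
  · rw [Real.sqrt_eq_zero'.2 (not_lt.1 fun h => hm (mem_Icc_ceil_sqrt_of_sq_lt (by linarith))),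
      mul_zero, zero_div]

end Ellipse

theorem IsCoprime.isCoprime_sq_add_sq {p q : ℤ} (h : IsCoprime p q) :
    IsCoprime q (p ^ 2 + q ^ 2) := by
  have := (h.mul_left h).add_mul_left_left q
  rw [← sq, ← sq] at this
  exact this.symm

/-- Multiplication by the Gaussian integer `q - p i`: the coordinates in which the quadratic form
of `lamkl (p / q)` is diagonal. -/
def latticeRot (p q : ℤ) (x : ℤ × ℤ) : ℤ × ℤ := (q * x.1 + p * x.2, q * x.2 - p * x.1)

theorem latticeRot_injective {p q : ℤ} (h : p ^ 2 + q ^ 2 ≠ 0) :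
    Function.Injective (latticeRot p q) := by
  rintro ⟨k, l⟩ ⟨k', l'⟩ hkl
  simp only [latticeRot, Prod.mk.injEq] at hkl
  obtain ⟨h1, h2⟩ := hkl
  exact Prod.ext (mul_left_cancel₀ h (by linear_combination q * h1 - p * h2))
    (mul_left_cancel₀ h (by linear_combination p * h1 + q * h2))

theorem range_latticeRot {p q : ℤ} (h : IsCoprime p q) :
    Set.range (latticeRot p q) = {y | p ^ 2 + q ^ 2 ∣ p * y.1 + q * y.2} := by
  have hD : p ^ 2 + q ^ 2 ≠ 0 := h.sq_add_sq_ne_zero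
  ext ⟨m, n⟩
  simp only [Set.mem_range, Set.mem_ofPred_eq, latticeRot, Prod.ext_iff, Prod.exists]
  constructor
  · rintro ⟨k, l, rfl, rfl⟩
    exact ⟨l, by ring⟩
  · rintro ⟨l, hl⟩
    -- `q (q m - p n) = (p ^ 2 + q ^ 2) m - p (p m + q n)`, and `q` is coprime to `p ^ 2 + q ^ 2`
    obtain ⟨k, hk⟩ : p ^ 2 + q ^ 2 ∣ q * m - p * n :=
      h.isCoprime_sq_add_sq.symm.dvd_of_dvd_mul_left ⟨m - p * l, by linear_combination (-p) * hl⟩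
    exact ⟨k, l, mul_left_cancel₀ hD (by linear_combination (-q) * hk - p * hl),
      mul_left_cancel₀ hD (by linear_combination (-q) * hl + p * hk)⟩

theorem lamkl_div_eq {p q : ℤ} (hq : q ≠ 0) (ε : ℝ) (k l : ℤ) :
    lamkl (p / q) ε k l = 4 * π ^ 2 / (p ^ 2 + q ^ 2) *
      (((latticeRot p q (k, l)).1 : ℝ) ^ 2 + ε ^ 2 * ((latticeRot p q (k, l)).2 : ℝ) ^ 2) := by
  have hq' : (q : ℝ) ≠ 0 := Int.cast_ne_zero.2 hq
  have hD : (p : ℝ) ^ 2 + q ^ 2 ≠ 0 := by positivity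
  simp only [lamkl, latticeRot]
  push_cast
  field_simp
  ring

theorem Neps_div_eq_ncard {p q : ℤ} (hq : q ≠ 0) (hpq : IsCoprime p q) (ε lam : ℝ) :
    Neps (p / q) ε lam = {y : ℤ × ℤ | p ^ 2 + q ^ 2 ∣ p * y.1 + q * y.2 ∧
      (y.1 : ℝ) ^ 2 + ε ^ 2 * (y.2 : ℝ) ^ 2 < lam * (p ^ 2 + q ^ 2) / (4 * π ^ 2)}.ncard := by
  have hD : (0 : ℝ) < p ^ 2 + q ^ 2 := by have : (q : ℝ) ≠ 0 := Int.cast_ne_zero.2 hq; positivity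
  have hpre : {x : ℤ × ℤ | lamkl (p / q) ε x.1 x.2 < lam} = latticeRot p q ⁻¹'
      {y | (y.1 : ℝ) ^ 2 + ε ^ 2 * (y.2 : ℝ) ^ 2 < lam * (p ^ 2 + q ^ 2) / (4 * π ^ 2)} := by
    ext ⟨k, l⟩
    rw [Set.mem_preimage, Set.mem_ofPred_eq, Set.mem_ofPred_eq, lamkl_div_eq hq,
      lt_div_iff₀ (by positivity), div_mul_eq_mul_div, div_lt_iff₀ hD, mul_comm]
  rw [Neps, Nat.card_coe_set_eq, hpre, ← Set.ncard_image_of_injective _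
    (latticeRot_injective (by exact_mod_cast hD.ne')), Set.image_preimage_eq_inter_range,
    range_latticeRot hpq, Set.inter_comm]
  rfl

theorem weyl_summand_eq {D : ℝ} (hD : 0 < D) (lam x : ℝ) :
    (if |x| < √lam / (2 * π) * √D then 1 / (π * √D) * √(lam - 4 * π ^ 2 * x ^ 2 / D) else 0) =
      2 * √(lam * D / (4 * π ^ 2) - x ^ 2) / D := by
  have hsD : 0 < √D := Real.sqrt_pos.2 hD
  have h2π : √(4 * π ^ 2) = 2 * π := by
    rw [show 4 * π ^ 2 = (2 * π) ^ 2 by ring, Real.sqrt_sq (by positivity)]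
  have hradius : √lam / (2 * π) * √D = √(lam * D / (4 * π ^ 2)) := by
    rw [Real.sqrt_div' _ (by positivity), Real.sqrt_mul' _ hD.le, h2π]; ring
  have hsub : lam - 4 * π ^ 2 * x ^ 2 / D = (2 * π / √D) ^ 2 * (lam * D / (4 * π ^ 2) - x ^ 2) := by
    rw [div_pow, Real.sq_sqrt hD.le]; field_simp; ring
  split_ifs with h
  · rw [hsub, Real.sqrt_mul (by positivity), Real.sqrt_sq (by positivity)]
    field_simp
    rw [Real.sq_sqrt hD.le]
  · rw [hradius, Real.lt_sqrt (abs_nonneg _), sq_abs, not_lt] at h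
    rw [Real.sqrt_eq_zero'.2 (by linarith), mul_zero, zero_div]

theorem weyl_rational (p q : ℤ) (hq : q ≠ 0) (hpq : IsCoprime p q) (lam : ℝ) :
    Tendsto (fun ε : ℝ => ε * Neps ((p : ℝ) / q) ε lam) (𝓝[>] 0)
      (𝓝 (∑' k : ℤ,
        if |(k : ℝ)| < Real.sqrt lam / (2 * Real.pi) * Real.sqrt ((p : ℝ) ^ 2 + (q : ℝ) ^ 2)
        then (1 / (Real.pi * Real.sqrt ((p : ℝ) ^ 2 + (q : ℝ) ^ 2))) *
          Real.sqrt (lam - 4 * Real.pi ^ 2 * (k : ℝ) ^ 2 / ((p : ℝ) ^ 2 + (q : ℝ) ^ 2))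
        else 0)) := by
  have hD : (0 : ℝ) < p ^ 2 + q ^ 2 := by
    have : (q : ℝ) ≠ 0 := Int.cast_ne_zero.2 hq
    positivity
  have hlim := tendsto_mul_ncard_ellipse p q (lam * (p ^ 2 + q ^ 2) / (4 * π ^ 2))
    (by exact_mod_cast hD) hpq.isCoprime_sq_add_sq
  push_cast at hlim
  simp_rw [Neps_div_eq_ncard hq hpq, weyl_summand_eq hD]
  exact hlim
end

section
/- For t > 0, (1/2)∫_R (η/sinh(tη)) e^{-tη²} dη ≠ (3√π)/(4 t^{3/2}). Consequently, the Laplace transform tr e^{-tΔ_ε} ~ (3Γ(3/2)/(8π²ε²)) t^{-3/2} of the Sol-manifold eigenvalue asymptotics N_ε(λ) ~ (1/(4π²))λ^{3/2}ε⁻² does not agree with the noncommutative Weyl prediction (1/(4π²ε²))·(1/2)∫_R (η/sinh(tη)) e^{-tη²} dη. -/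
open Real MeasureTheory

theorem sol_manifold_weyl_mismatch (t : ℝ) (ht : 0 < t) :
    (1 / 2) * (∫ η : ℝ,
      (if η = 0 then 1 / t else η / Real.sinh (t * η)) * Real.exp (-t * η ^ 2)) ≠
    3 * Real.sqrt Real.pi / (4 * t ^ ((3 : ℝ) / 2)) := by
  set f : ℝ → ℝ := fun η =>
    (if η = 0 then 1 / t else η / Real.sinh (t * η)) * Real.exp (-t * η ^ 2) with hf
  set g : ℝ → ℝ := fun η => (1 / t) * Real.exp (-t * η ^ 2) with hg
  have hcoef : ∀ η : ℝ, 0 ≤ (if η = 0 then 1 / t else η / Real.sinh (t * η)) ∧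
      (if η = 0 then 1 / t else η / Real.sinh (t * η)) ≤ 1 / t := by
    intro η
    by_cases hη : η = 0
    · simp [hη, ht.le]
    · simp only [hη, if_false]
      rcases lt_or_gt_of_ne hη with hneg | hpos
      · have h1 : t * η < 0 := mul_neg_of_pos_of_neg ht hneg
        have h2 : Real.sinh (t * η) < t * η := Real.sinh_lt_self_iff.mpr h1
        have hs : Real.sinh (t * η) < 0 := by linarith
        constructor
        · exact le_of_lt (div_pos_of_neg_of_neg hneg hs)
        · rw [show η / Real.sinh (t * η) = (-η) / (-Real.sinh (t * η)) by
            rw [neg_div_neg_eq]]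
          rw [div_le_div_iff₀ (by linarith) ht]
          nlinarith
      · have h1 : 0 < t * η := mul_pos ht hpos
        have h2 : t * η < Real.sinh (t * η) := Real.self_lt_sinh_iff.mpr h1
        have hs : 0 < Real.sinh (t * η) := by linarith
        constructor
        · exact le_of_lt (div_pos hpos hs)
        · rw [div_le_div_iff₀ hs ht]
          nlinarith
  have hgi : Integrable g := ((integrable_exp_neg_mul_sq ht).const_mul (1 / t))
  have hmono : ∫ η, f η ≤ ∫ η, g η := by
    refine integral_mono_of_nonneg ?_ hgi ?_
    · filter_upwards with η
      exact mul_nonneg (hcoef η).1 (Real.exp_pos _).le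
    · filter_upwards with η
      exact mul_le_mul_of_nonneg_right (hcoef η).2 (Real.exp_pos _).le
  have hgval : ∫ η, g η = (1 / t) * Real.sqrt (Real.pi / t) := by
    simp only [hg]
    rw [MeasureTheory.integral_const_mul, integral_gaussian]
  have hlt : (1 / 2) * (∫ η, f η) < 3 * Real.sqrt Real.pi / (4 * t ^ ((3 : ℝ) / 2)) := by
    have h3 : t ^ ((3 : ℝ) / 2) = t * Real.sqrt t := by
      rw [show (3 : ℝ) / 2 = 1 + 1 / 2 by norm_num, Real.rpow_add ht, Real.rpow_one,
        ← Real.sqrt_eq_rpow]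
    have hsq : Real.sqrt (Real.pi / t) = Real.sqrt Real.pi / Real.sqrt t :=
      Real.sqrt_div Real.pi_pos.le t
    have hst : 0 < Real.sqrt t := Real.sqrt_pos.mpr ht
    have hsp : 0 < Real.sqrt Real.pi := Real.sqrt_pos.mpr Real.pi_pos
    calc (1 / 2) * (∫ η, f η) ≤ (1 / 2) * ((1 / t) * Real.sqrt (Real.pi / t)) := by
          rw [← hgval]; linarith
      _ < 3 * Real.sqrt Real.pi / (4 * t ^ ((3 : ℝ) / 2)) := by
          rw [h3, hsq,
            show (1 / 2 : ℝ) * ((1 / t) * (Real.sqrt Real.pi / Real.sqrt t)) =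
              2 * Real.sqrt Real.pi / (4 * (t * Real.sqrt t)) by field_simp; ring]
          rw [div_lt_div_iff₀ (by positivity) (by positivity)]
          nlinarith [mul_pos (mul_pos ht hst) hsp]
  exact ne_of_lt hlt
end
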